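/- Let w = (1/2)⟨u_x, κ u_x⟩ - ⟨a, u_{xx}⟩ where u solves the Toda-type equation u_{xy} = exp(Ku), κ_{ij} = a_i k_{ij} is symmetric, and a is the vector of coefficients. Then D_y(w) = 0 along solutions, i.e., w is an integral of the 2D Toda lattice. -/

import Mathlib

noncomputable def pdx (F : ℝ × ℝ → ℝ) : ℝ × ℝ → ℝ := fun q => fderiv ℝ F q (1, 0)
noncomputable def pdy (F : ℝ × ℝ → ℝ) : ℝ × ℝ → ℝ := fun q => fderiv ℝ F q (0, 1)

lemma hasDerivAt_pdx {F : ℝ × ℝ → ℝ} {q : ℝ × ℝ} (hF : DifferentiableAt ℝ F q) :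
    HasDerivAt (fun x' => F (x', q.2)) (pdx F q) q.1 := by
  have h : HasDerivAt (fun x' : ℝ => ((x', q.2) : ℝ × ℝ)) ((1 : ℝ), (0 : ℝ)) q.1 :=
    (hasDerivAt_id q.1).prodMk (hasDerivAt_const q.1 q.2)
  exact hF.hasFDerivAt.comp_hasDerivAt q.1 h

lemma hasDerivAt_pdy {F : ℝ × ℝ → ℝ} {q : ℝ × ℝ} (hF : DifferentiableAt ℝ F q) :
    HasDerivAt (fun y' => F (q.1, y')) (pdy F q) q.2 := by
  have h : HasDerivAt (fun y' : ℝ => ((q.1, y') : ℝ × ℝ)) ((0 : ℝ), (1 : ℝ)) q.2 :=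
    (hasDerivAt_const q.2 q.1).prodMk (hasDerivAt_id q.2)
  exact hF.hasFDerivAt.comp_hasDerivAt q.2 h

lemma contDiff_pdx {F : ℝ × ℝ → ℝ} (hF : ContDiff ℝ (⊤ : ℕ∞) F) : ContDiff ℝ (⊤ : ℕ∞) (pdx F) :=
  (hF.fderiv_right (by simp)).clm_apply contDiff_const

lemma contDiff_pdy {F : ℝ × ℝ → ℝ} (hF : ContDiff ℝ (⊤ : ℕ∞) F) : ContDiff ℝ (⊤ : ℕ∞) (pdy F) :=
  (hF.fderiv_right (by simp)).clm_apply contDiff_const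

lemma pdy_pdx_swap {F : ℝ × ℝ → ℝ} (hF : ContDiff ℝ (⊤ : ℕ∞) F) (q : ℝ × ℝ) :
    pdy (pdx F) q = pdx (pdy F) q := by
  have hdiff : ∀ p, HasFDerivAt F (fderiv ℝ F p) p := fun p =>
    (hF.differentiable (by simp) p).hasFDerivAt
  have hf' : DifferentiableAt ℝ (fderiv ℝ F) q :=
    ((hF.fderiv_right (m := (⊤ : ℕ∞)) (by simp)).differentiable (by simp)) q
  have hsymm := second_derivative_symmetric hdiff hf'.hasFDerivAt
  have h1 : ∀ v : ℝ × ℝ, HasFDerivAt (fun p => fderiv ℝ F p v)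
      ((ContinuousLinearMap.apply ℝ ℝ v).comp (fderiv ℝ (fderiv ℝ F) q)) q :=
    fun v => (ContinuousLinearMap.apply ℝ ℝ v).hasFDerivAt.comp q hf'.hasFDerivAt
  have e1 : pdy (pdx F) q = fderiv ℝ (fderiv ℝ F) q (0, 1) (1, 0) := by
    show fderiv ℝ (pdx F) q (0, 1) = _
    rw [show pdx F = fun p => fderiv ℝ F p (1, 0) from rfl, (h1 (1, 0)).fderiv]
    rfl
  have e2 : pdx (pdy F) q = fderiv ℝ (fderiv ℝ F) q (1, 0) (0, 1) := by
    show fderiv ℝ (pdy F) q (1, 0) = _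
    rw [show pdy F = fun p => fderiv ℝ F p (0, 1) from rfl, (h1 (0, 1)).fderiv]
    rfl
  rw [e1, e2, hsymm]

/-- For the 2D Toda lattice `u_{xy} = exp(Ku)` with symmetrizable
nondegenerate matrix `K` (`κ_{ij} = a_i K_{ij}` symmetric, `a_i ≠ 0`), the density
`w = (1/2)⟨u_x, κ u_x⟩ - ⟨a, u_{xx}⟩` satisfies `D_y(w) = 0` along solutions. -/
theorem stmt_4 (r : ℕ) (K : Matrix (Fin r) (Fin r) ℝ) (hK : IsUnit K.det)
    (a : Fin r → ℝ) (ha : ∀ i, a i ≠ 0)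
    (hsym : ∀ i j, a i * K i j = a j * K j i)
    (u : ℝ → ℝ → Fin r → ℝ)
    (hu : ContDiff ℝ (⊤ : ℕ∞) (fun p : ℝ × ℝ => u p.1 p.2))
    (heq : ∀ x y i, deriv (fun y' => deriv (fun x' => u x' y' i) x) y =
      Real.exp (∑ j, K i j * u x y j))
    (w : ℝ → ℝ → ℝ)
    (hw : ∀ x y, w x y =
      (1 / 2) * ∑ i, ∑ j, (a i * K i j) *
          deriv (fun x' => u x' y i) x * deriv (fun x' => u x' y j) x
        - ∑ i, a i * iteratedDeriv 2 (fun x' => u x' y i) x) :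
    ∀ x y, deriv (fun y' => w x y') y = 0 := by
  intro x y
  -- components as functions on ℝ × ℝ
  have hg : ∀ i, ContDiff ℝ (⊤ : ℕ∞) (fun q : ℝ × ℝ => u q.1 q.2 i) := fun i => contDiff_pi.mp hu i
  set g : Fin r → ℝ × ℝ → ℝ := fun i q => u q.1 q.2 i with hgdef
  set E : Fin r → ℝ × ℝ → ℝ := fun i q => Real.exp (∑ j, K i j * g j q) with hEdef
  have hgc : ∀ i, ContDiff ℝ (⊤ : ℕ∞) (g i) := hg
  -- first partial derivative in x equals pdx
  have hdx : ∀ i (q : ℝ × ℝ), deriv (fun x' => u x' q.2 i) q.1 = pdx (g i) q :=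
    fun i q => (hasDerivAt_pdx ((hgc i).differentiable (by simp) q)).deriv
  -- the Toda equation: pdy (pdx (g i)) = E i
  have heq' : ∀ i (q : ℝ × ℝ), pdy (pdx (g i)) q = E i q := by
    intro i q
    have h1 : (fun y' => deriv (fun x' => u x' y' i) q.1) =
        fun y' => pdx (g i) (q.1, y') := funext fun y' => hdx i (q.1, y')
    have h2 := heq q.1 q.2 i
    rw [h1] at h2
    rw [← (hasDerivAt_pdy ((contDiff_pdx (hgc i)).differentiable (by simp) q)).deriv]
    exact h2
  -- derivative of E i in x
  have hEinner : ∀ i (q : ℝ × ℝ), HasDerivAt (fun x' => ∑ j, K i j * g j (x', q.2))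
      (∑ j, K i j * pdx (g j) q) q.1 := fun i q =>
    HasDerivAt.fun_sum fun j _ => (hasDerivAt_pdx ((hgc j).differentiable (by simp) q)).const_mul (K i j)
  have hEx : ∀ i (q : ℝ × ℝ), HasDerivAt (fun x' => E i (x', q.2))
      (E i q * ∑ j, K i j * pdx (g j) q) q.1 := fun i q => (hEinner i q).exp
  have hEc : ∀ i, ContDiff ℝ (⊤ : ℕ∞) (E i) := fun i =>
    Real.contDiff_exp.comp (ContDiff.sum fun j _ => contDiff_const.mul (hgc j))
  have hpdxE : ∀ i (q : ℝ × ℝ), pdx (E i) q = E i q * ∑ j, K i j * pdx (g j) q :=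
    fun i q => (hasDerivAt_pdx ((hEc i).differentiable (by simp) q)).unique (hEx i q)
  -- rewrite w in terms of pdx
  have hiter : ∀ i y', iteratedDeriv 2 (fun x' => u x' y' i) x = pdx (pdx (g i)) (x, y') := by
    intro i y'
    rw [show (2 : ℕ) = 1 + 1 from rfl, iteratedDeriv_succ, iteratedDeriv_one]
    have h1 : deriv (fun x' => u x' y' i) = fun t => pdx (g i) (t, y') :=
      funext fun t => hdx i (t, y')
    rw [h1]
    exact (hasDerivAt_pdx ((contDiff_pdx (hgc i)).differentiable (by simp) (x, y'))).deriv
  have hwrep : ∀ y', w x y' =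
      (1 / 2) * ∑ i, ∑ j, (a i * K i j) * pdx (g i) (x, y') * pdx (g j) (x, y')
        - ∑ i, a i * pdx (pdx (g i)) (x, y') := by
    intro y'
    rw [hw]
    congr 1
    · congr 1
      refine Finset.sum_congr rfl fun i _ => Finset.sum_congr rfl fun j _ => ?_
      rw [hdx i (x, y'), hdx j (x, y')]
    · exact Finset.sum_congr rfl fun i _ => by rw [hiter i y']
  -- derivatives in y
  have hUX : ∀ i, HasDerivAt (fun y' => pdx (g i) (x, y')) (E i (x, y)) y := by
    intro i
    have h := hasDerivAt_pdy ((contDiff_pdx (hgc i)).differentiable (by simp) (x, y))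
    rwa [heq' i (x, y)] at h
  have hUXX : ∀ i, HasDerivAt (fun y' => pdx (pdx (g i)) (x, y'))
      (E i (x, y) * ∑ j, K i j * pdx (g j) (x, y)) y := by
    intro i
    have h := hasDerivAt_pdy ((contDiff_pdx (contDiff_pdx (hgc i))).differentiable (by simp) (x, y))
    rwa [pdy_pdx_swap (contDiff_pdx (hgc i)) (x, y),
      show pdy (pdx (g i)) = E i from funext (heq' i), hpdxE i (x, y)] at h
  -- assemble
  have hW : HasDerivAt (fun y' =>
      (1 / 2) * ∑ i, ∑ j, (a i * K i j) * pdx (g i) (x, y') * pdx (g j) (x, y')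
        - ∑ i, a i * pdx (pdx (g i)) (x, y'))
      ((1 / 2) * ∑ i, ∑ j,
          ((a i * K i j) * E i (x, y) * pdx (g j) (x, y)
            + (a i * K i j) * pdx (g i) (x, y) * E j (x, y))
        - ∑ i, a i * (E i (x, y) * ∑ j, K i j * pdx (g j) (x, y))) y := by
    refine HasDerivAt.sub ?_ (HasDerivAt.fun_sum fun i _ => (hUXX i).const_mul (a i))
    refine HasDerivAt.const_mul _ ?_
    refine HasDerivAt.fun_sum fun i _ => HasDerivAt.fun_sum fun j _ => ?_
    exact ((hUX i).const_mul (a i * K i j)).mul (hUX j)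
  have hderiv : deriv (fun y' => w x y') y =
      (1 / 2) * ∑ i, ∑ j,
          ((a i * K i j) * E i (x, y) * pdx (g j) (x, y)
            + (a i * K i j) * pdx (g i) (x, y) * E j (x, y))
        - ∑ i, a i * (E i (x, y) * ∑ j, K i j * pdx (g j) (x, y)) := by
    rw [funext hwrep]
    exact hW.deriv
  rw [hderiv]
  -- algebra
  set UX : Fin r → ℝ := fun i => pdx (g i) (x, y) with hUXdef
  set EE : Fin r → ℝ := fun i => E i (x, y) with hEEdef
  have hA : (∑ i, ∑ j, ((a i * K i j) * EE i * UX j + (a i * K i j) * UX i * EE j))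
      = (∑ i, ∑ j, a i * K i j * EE i * UX j) + (∑ i, ∑ j, a i * K i j * EE i * UX j) := by
    have split : ∀ i : Fin r, ∑ j, ((a i * K i j) * EE i * UX j + (a i * K i j) * UX i * EE j)
        = (∑ j, (a i * K i j) * EE i * UX j) + ∑ j, (a i * K i j) * UX i * EE j :=
      fun i => Finset.sum_add_distrib
    rw [Finset.sum_congr rfl fun i _ => split i, Finset.sum_add_distrib]
    congr 1
    calc ∑ i, ∑ j, (a i * K i j) * UX i * EE j
        = ∑ i, ∑ j, (a j * K j i) * UX i * EE j := by
          refine Finset.sum_congr rfl fun i _ => Finset.sum_congr rfl fun j _ => ?_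
          rw [hsym i j]
      _ = ∑ j, ∑ i, (a j * K j i) * UX i * EE j := Finset.sum_comm
      _ = ∑ i, ∑ j, a i * K i j * EE i * UX j := by
          refine Finset.sum_congr rfl fun i _ => Finset.sum_congr rfl fun j _ => ?_
          ring
  have hB : (∑ i, a i * (EE i * ∑ j, K i j * UX j))
      = ∑ i, ∑ j, a i * K i j * EE i * UX j := by
    refine Finset.sum_congr rfl fun i _ => ?_
    rw [Finset.mul_sum, Finset.mul_sum]
    exact Finset.sum_congr rfl fun j _ => by ring
  rw [hA, hB]
  ring
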